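/- arXiv:1911.00124 — 4 statements merged into one kernel-verified Lean document; each statement's English description precedes it below -/
import Mathlib

section
/- If a holomorphic triple (E₁, E₂, φ) of type with ranks r₁, r₂ ≥ 1 is q-stable, where q(m) is a polynomial with positive leading coefficient whose leading coefficient is sufficiently large (specifically, r_K·q(m) ≥ r_K·P_{E₁}(m) − r₁·P_K(m) for all m ≫ 0 where K = ker φ), then the morphism φ : E₁ → E₂ is injective. -/
theorem stmt0_general {R F : Type*} [CommRing R] [Field F] [LinearOrder F] [IsStrictOrderedRing F]
    {E₁ E₂ : Type*} [AddCommGroup E₁] [Module R E₁] [AddCommGroup E₂] [Module R E₂]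
    (φ : E₁ →ₗ[R] E₂)
    (r₁ r₂ P₁ q : F)
    (rk P : Submodule R E₁ → F)
    (hr₂ : 0 < r₂)
    (hstab : LinearMap.ker φ ≠ ⊥ →
      r₂ * (r₁ * P (LinearMap.ker φ) - rk (LinearMap.ker φ) * P₁
        + rk (LinearMap.ker φ) * q) < 0)
    (hbig : rk (LinearMap.ker φ) * P₁ - r₁ * P (LinearMap.ker φ)
        ≤ rk (LinearMap.ker φ) * q) :
    Function.Injective φ := by
  rw [← LinearMap.ker_eq_bot]
  by_contra hK
  have hdestab := neg_of_mul_neg_right (hstab hK) hr₂.le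
  linarith

/-- For a holomorphic triple `(E₁, E₂, φ)` with ranks `r₁, r₂ ≥ 1`
(modelled as modules, with abstract rank and Hilbert-polynomial functions on
subsheaves of `E₁`, valued in a linearly ordered field with the eventual ordering),
if the triple is `q`-stable — so that in particular, if `K = ker φ` is nonzero, the
subtriple `K → 0` destabilizes, i.e. `r₂(r₁ P_K − rk K · P_{E₁} + rk K · q) < 0` —
and `q` is sufficiently large, namely `rk K · P_{E₁} − r₁ · P_K ≤ rk K · q`,
then `φ` is injective. -/
theorem stmt0 {R F : Type*} [CommRing R] [Field F] [LinearOrder F] [IsStrictOrderedRing F]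
    {E₁ E₂ : Type*} [AddCommGroup E₁] [Module R E₁] [AddCommGroup E₂] [Module R E₂]
    (φ : E₁ →ₗ[R] E₂)
    (r₁ r₂ P₁ q : F)
    (rk P : Submodule R E₁ → F)
    (hr₁ : 0 < r₁) (hr₂ : 0 < r₂)
    (hrkpos : ∀ N : Submodule R E₁, N ≠ ⊥ → 0 < rk N)
    (hstab : LinearMap.ker φ ≠ ⊥ →
      r₂ * (r₁ * P (LinearMap.ker φ) - rk (LinearMap.ker φ) * P₁
        + rk (LinearMap.ker φ) * q) < 0)
    (hbig : rk (LinearMap.ker φ) * P₁ - r₁ * P (LinearMap.ker φ)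
        ≤ rk (LinearMap.ker φ) * q) :
    Function.Injective φ :=
  stmt0_general φ r₁ r₂ P₁ q rk P hr₂ hstab hbig
end

section
/- If the holomorphic triple (E₁, E₂, 0) with zero morphism is q'-semistable, then q' = P_{E₂}/r₂; in particular, applying the q'-semistability inequality to the subtriples (0, E₂', 0) and (E₁, E₂', 0) for a proper subsheaf E₂' ⊂ E₂ yields P_{E₂'}/r₂' < q' ≤ P_{E₂/E₂'}/(r₂ − r₂'), forcing E₂ to be semistable, and the analogous argument for E₁ forces E₁ to be semistable. Moreover such a triple can never be q'-stable. -/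
/-!
The subtriples `(0, E₂, 0)` and `(E₁, 0, 0)` give opposite inequalities between `q'` and
`P₂ / r₂`, so `q' = P₂ / r₂`; then `Θ` vanishes on `(0, E₂, 0)`, so the triple is not stable.
Always `Θ(0, E₂', 0) = P_{E₂'} / r₂' - q'`, and at this value of `q'` the quantity `Θ(E₁', E₂, 0)`
is a positive multiple of `P_{E₁'} / r₁' - P₁ / r₁`; semistability of the triple thus bounds the slopes of the
subsheaves of `E₂` and of `E₁`.
-/

namespace HolomorphicTriple

variable {F : Type*} [Field F]

/-- `Θ_{q}` of a subtriple with ranks `s₁, s₂` and Hilbert polynomials `p₁, p₂`, inside a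
triple with ranks `r₁, r₂` and Hilbert polynomials `P₁, P₂`. -/
def theta (r₁ r₂ P₁ P₂ q s₁ s₂ p₁ p₂ : F) : F :=
  ((p₁ + p₂) / (s₁ + s₂) - q) - (s₁ / (s₁ + s₂)) * ((r₁ + r₂) / r₁) * ((P₁ + P₂) / (r₁ + r₂) - q)

theorem theta_zero_left (r₁ r₂ P₁ P₂ q s₂ p₂ : F) :
    theta r₁ r₂ P₁ P₂ q 0 s₂ 0 p₂ = p₂ / s₂ - q := by
  simp [theta]

variable [LinearOrder F] [IsStrictOrderedRing F]

theorem le_div_of_theta_top_zero_nonpos {r₁ r₂ P₁ P₂ q : F} (hr₁ : 0 < r₁) (hr₂ : 0 < r₂)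
    (h : theta r₁ r₂ P₁ P₂ q r₁ 0 P₁ 0 ≤ 0) : q ≤ P₂ / r₂ := by
  have hθ : theta r₁ r₂ P₁ P₂ q r₁ 0 P₁ 0 = (r₂ * q - P₂) / r₁ := by
    have : r₁ + r₂ ≠ 0 := by positivity
    simp only [theta, add_zero]
    field_simp
    ring
  rw [hθ, div_le_iff₀ hr₁, zero_mul, sub_nonpos, mul_comm] at h
  exact (le_div_iff₀ hr₂).mpr h

theorem div_le_of_theta_zero_top_nonpos {r₁ r₂ P₁ P₂ s₁ p₁ : F} (hr₁ : 0 < r₁) (hr₂ : 0 < r₂)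
    (hs₁ : 0 < s₁) (h : theta r₁ r₂ P₁ P₂ (P₂ / r₂) s₁ r₂ p₁ P₂ ≤ 0) : p₁ / s₁ ≤ P₁ / r₁ := by
  have hθ : theta r₁ r₂ P₁ P₂ (P₂ / r₂) s₁ r₂ p₁ P₂ = (p₁ * r₁ - P₁ * s₁) / ((s₁ + r₂) * r₁) := by
    have : r₁ + r₂ ≠ 0 := by positivity
    have : s₁ + r₂ ≠ 0 := by positivity
    simp only [theta]
    field_simp
    ring
  rw [hθ, div_le_iff₀ (by positivity), zero_mul, sub_nonpos] at h
  exact (div_le_div_iff₀ hs₁ hr₁).mpr h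

end HolomorphicTriple

open HolomorphicTriple in
/-- Subsheaves of `E₁` (resp. `E₂`) are modelled by index types `ι₁` (resp. `ι₂`) carrying rank
and Hilbert-polynomial functions, with distinguished elements `bot` (the zero subsheaf) and `top`
(the whole sheaf); subtriples of `(E₁, E₂, 0)` are arbitrary pairs `(a, b)`. -/
theorem stmt3_general {F : Type*} [Field F] [LinearOrder F] [IsStrictOrderedRing F] {ι₁ ι₂ : Type*}
    (rk₁ Pf₁ : ι₁ → F) (rk₂ Pf₂ : ι₂ → F)
    (bot₁ top₁ : ι₁) (bot₂ top₂ : ι₂)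
    (r₁ r₂ P₁ P₂ q' : F) (hr₁ : 0 < r₁) (hr₂ : 0 < r₂)
    (hb₁ : rk₁ bot₁ = 0) (hPb₁ : Pf₁ bot₁ = 0) (ht₁ : rk₁ top₁ = r₁) (hPt₁ : Pf₁ top₁ = P₁)
    (hb₂ : rk₂ bot₂ = 0) (hPb₂ : Pf₂ bot₂ = 0) (ht₂ : rk₂ top₂ = r₂) (hPt₂ : Pf₂ top₂ = P₂)
    (hpos₁ : ∀ a, a ≠ bot₁ → 0 < rk₁ a)
    (Θ : ι₁ → ι₂ → F)
    (hΘ : ∀ a b, Θ a b =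
      ((Pf₁ a + Pf₂ b) / (rk₁ a + rk₂ b) - q')
        - (rk₁ a / (rk₁ a + rk₂ b)) * ((r₁ + r₂) / r₁) * ((P₁ + P₂) / (r₁ + r₂) - q'))
    (hss : ∀ a b, ¬(a = bot₁ ∧ b = bot₂) → ¬(a = top₁ ∧ b = top₂) → Θ a b ≤ 0) :
    q' = P₂ / r₂ ∧
    (∀ b, b ≠ bot₂ → b ≠ top₂ → Pf₂ b / rk₂ b ≤ P₂ / r₂) ∧
    (∀ a, a ≠ bot₁ → a ≠ top₁ → Pf₁ a / rk₁ a ≤ P₁ / r₁) ∧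
    ¬(∀ a b, ¬(a = bot₁ ∧ b = bot₂) → ¬(a = top₁ ∧ b = top₂) → Θ a b < 0) := by
  have hΘ : ∀ a b, Θ a b = theta r₁ r₂ P₁ P₂ q' (rk₁ a) (rk₂ b) (Pf₁ a) (Pf₂ b) := hΘ
  have hbt₁ : bot₁ ≠ top₁ := fun h => hr₁.ne' (ht₁ ▸ h ▸ hb₁)
  have hbt₂ : bot₂ ≠ top₂ := fun h => hr₂.ne' (ht₂ ▸ h ▸ hb₂)
  have hΘ_bot_left : ∀ b, Θ bot₁ b = Pf₂ b / rk₂ b - q' := fun b => by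
    rw [hΘ, hb₁, hPb₁, theta_zero_left]
  have hΘ_bot_top : Θ bot₁ top₂ = P₂ / r₂ - q' := by rw [hΘ_bot_left, ht₂, hPt₂]
  have hlow : P₂ / r₂ ≤ q' :=
    sub_nonpos.mp (hΘ_bot_top ▸ hss bot₁ top₂ (fun h => hbt₂ h.2.symm) (fun h => hbt₁ h.1))
  have hup : q' ≤ P₂ / r₂ := by
    have h := hss top₁ bot₂ (fun h => hbt₁ h.1.symm) (fun h => hbt₂ h.2)
    rw [hΘ, ht₁, hPt₁, hb₂, hPb₂] at h
    exact le_div_of_theta_top_zero_nonpos hr₁ hr₂ h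
  have hq : q' = P₂ / r₂ := le_antisymm hup hlow
  refine ⟨hq, fun b hb _ => ?_, fun a ha hat => ?_, fun hst => ?_⟩
  · have h := hss bot₁ b (fun h => hb h.2) (fun h => hbt₁ h.1)
    rw [hΘ_bot_left, sub_nonpos] at h
    exact hq ▸ h
  · have h := hss a top₂ (fun h => ha h.1) (fun h => hat h.1)
    rw [hΘ, ht₂, hPt₂, hq] at h
    exact div_le_of_theta_zero_top_nonpos hr₁ hr₂ (hpos₁ a ha) h
  · have h := hst bot₁ top₂ (fun h => hbt₂ h.2.symm) (fun h => hbt₁ h.1)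
    rw [hΘ_bot_top, hq, sub_self] at h
    exact lt_irrefl 0 h

/-- Let `(E₁, E₂, 0)` be a holomorphic triple with zero morphism.
Subsheaves of `E₁` (resp. `E₂`) are modelled by index types `ι₁` (resp. `ι₂`)
carrying rank and Hilbert-polynomial functions, with distinguished elements `bot`
(the zero subsheaf) and `top` (the whole sheaf); torsion-freeness means nonzero
subsheaves have positive rank. Subtriples of `(E₁, E₂, 0)` are arbitrary pairs
`(a, b)`, nontrivial if not both zero and not both the full sheaf. If the triple is
`q'`-semistable (`Θ_{q'} ≤ 0` on all nontrivial subtriples), then `q' = P_{E₂}/r₂`,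
`E₂` is semistable, `E₁` is semistable, and the triple can never be `q'`-stable
(`Θ_{q'} < 0` fails for some nontrivial subtriple). -/
theorem stmt3 {F : Type*} [Field F] [LinearOrder F] [IsStrictOrderedRing F] {ι₁ ι₂ : Type*}
    (rk₁ Pf₁ : ι₁ → F) (rk₂ Pf₂ : ι₂ → F)
    (bot₁ top₁ : ι₁) (bot₂ top₂ : ι₂)
    (r₁ r₂ P₁ P₂ q' : F) (hr₁ : 0 < r₁) (hr₂ : 0 < r₂)
    (hb₁ : rk₁ bot₁ = 0) (hPb₁ : Pf₁ bot₁ = 0) (ht₁ : rk₁ top₁ = r₁) (hPt₁ : Pf₁ top₁ = P₁)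
    (hb₂ : rk₂ bot₂ = 0) (hPb₂ : Pf₂ bot₂ = 0) (ht₂ : rk₂ top₂ = r₂) (hPt₂ : Pf₂ top₂ = P₂)
    (hpos₁ : ∀ a, a ≠ bot₁ → 0 < rk₁ a) (hpos₂ : ∀ b, b ≠ bot₂ → 0 < rk₂ b)
    (hle₁ : ∀ a, rk₁ a ≤ r₁) (hle₂ : ∀ b, rk₂ b ≤ r₂)
    (Θ : ι₁ → ι₂ → F)
    (hΘ : ∀ a b, Θ a b =
      ((Pf₁ a + Pf₂ b) / (rk₁ a + rk₂ b) - q')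
        - (rk₁ a / (rk₁ a + rk₂ b)) * ((r₁ + r₂) / r₁) * ((P₁ + P₂) / (r₁ + r₂) - q'))
    (hss : ∀ a b, ¬(a = bot₁ ∧ b = bot₂) → ¬(a = top₁ ∧ b = top₂) → Θ a b ≤ 0) :
    q' = P₂ / r₂ ∧
    (∀ b, b ≠ bot₂ → b ≠ top₂ → Pf₂ b / rk₂ b ≤ P₂ / r₂) ∧
    (∀ a, a ≠ bot₁ → a ≠ top₁ → Pf₁ a / rk₁ a ≤ P₁ / r₁) ∧
    ¬(∀ a b, ¬(a = bot₁ ∧ b = bot₂) → ¬(a = top₁ ∧ b = top₂) → Θ a b < 0) :=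
  stmt3_general rk₁ Pf₁ rk₂ Pf₂ bot₁ top₁ bot₂ top₂ r₁ r₂ P₁ P₂ q' hr₁ hr₂ hb₁ hPb₁ ht₁ hPt₁ hb₂
    hPb₂ ht₂ hPt₂ hpos₁ Θ hΘ hss
end

section
/- Let (E₁, E₂, φ) be a q-stable torsion-free triple with q(m) a polynomial with positive values for m ≫ 0. Then the natural map Hom_S(E₂, E₂) → Hom_S(E₁, E₂), f ↦ f∘φ, is injective; equivalently, there is no nonzero endomorphism f of E₂ with f∘φ = 0. -/
/-! The kernel and the image of a nonzero endomorphism `f` of `E₂` with `f ∘ φ = 0` are both proper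
nonzero subsheaves (the kernel contains the image of `φ`). Their ranks and Hilbert polynomials add up
to those of `E₂`, so the mediant of their `q`-slopes `(P + q) / rk` is `(P E₂ + 2q) / r₂`. Stability
puts both slopes, hence also their mediant, below `(P E₂ + q) / r₂`, which forces `q < 0`. -/

open LinearMap

theorem add_div_add_lt_of_div_lt_of_div_lt {F : Type*} [Field F] [LinearOrder F]
    [IsStrictOrderedRing F] {x y a b c : F} (ha : 0 < a) (hb : 0 < b)
    (hx : x / a < c) (hy : y / b < c) : (x + y) / (a + b) < c := by
  rw [div_lt_iff₀ ha] at hx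
  rw [div_lt_iff₀ hb] at hy
  rw [div_lt_iff₀ (add_pos ha hb)]
  linarith

theorem LinearMap.ker_ne_bot_of_comp_eq_zero {R M N P : Type*} [Semiring R] [AddCommMonoid M]
    [AddCommMonoid N] [AddCommMonoid P] [Module R M] [Module R N] [Module R P]
    {φ : M →ₗ[R] N} {f : N →ₗ[R] P} (hφ : range φ ≠ ⊥) (hf : f ∘ₗ φ = 0) : ker f ≠ ⊥ :=
  ne_bot_of_le_ne_bot hφ (range_le_ker_iff.2 hf)

theorem stmt9_general {R F : Type*} [CommRing R] [Field F] [LinearOrder F] [IsStrictOrderedRing F]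
    {E₁ E₂ : Type*} [AddCommGroup E₁] [Module R E₁] [AddCommGroup E₂] [Module R E₂]
    (φ : E₁ →ₗ[R] E₂)
    (r₂ q : F) (hq : 0 < q) (hr₂ : 0 < r₂)
    (rk P : Submodule R E₂ → F)
    (hrk_top : rk ⊤ = r₂)
    (hrkpos : ∀ N : Submodule R E₂, N ≠ ⊥ → 0 < rk N)
    (hadd : ∀ f : E₂ →ₗ[R] E₂,
      rk (LinearMap.ker f) + rk (LinearMap.range f) = r₂ ∧
      P (LinearMap.ker f) + P (LinearMap.range f) = P ⊤)
    (hstab : ∀ N : Submodule R E₂, N ≠ ⊥ → N ≠ ⊤ →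
      P N / rk N + q / rk N < P ⊤ / r₂ + q / r₂)
    (hφ : LinearMap.range φ ≠ ⊥) :
    Function.Injective (fun f : E₂ →ₗ[R] E₂ => f ∘ₗ φ) := by
  intro f g hfg
  rw [← sub_eq_zero]
  by_contra hd
  have hdφ : (f - g) ∘ₗ φ = 0 := by rw [sub_comp, sub_eq_zero]; exact hfg
  have hker : ker (f - g) ≠ ⊥ := ker_ne_bot_of_comp_eq_zero hφ hdφ
  have hrange : range (f - g) ≠ ⊥ := mt range_eq_bot.1 hd
  obtain ⟨hrk, hP⟩ := hadd (f - g)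
  have hrange_top : range (f - g) ≠ ⊤ := by
    intro htop
    have := hrkpos _ hker
    rw [htop, hrk_top] at hrk
    linarith
  have slope_lt : ∀ N, N ≠ ⊥ → N ≠ ⊤ → (P N + q) / rk N < (P ⊤ + q) / r₂ := fun N h₁ h₂ => by
    simpa only [add_div] using hstab N h₁ h₂
  have mediant_lt := add_div_add_lt_of_div_lt_of_div_lt (hrkpos _ hker) (hrkpos _ hrange)
    (slope_lt _ hker (mt ker_eq_top.1 hd)) (slope_lt _ hrange hrange_top)
  rw [hrk, add_add_add_comm, hP, div_lt_div_iff_of_pos_right hr₂] at mediant_lt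
  linarith

/-- For a `q`-stable torsion-free triple `(E₁, E₂, φ)` with `q > 0`
(for `m ≫ 0`), the map `Hom(E₂,E₂) → Hom(E₁,E₂)`, `f ↦ f ∘ φ`, is injective.
Modelled with modules: `rk, P : Submodule R E₂ → F` are the rank and Hilbert
polynomial functions (additive on kernel/image of endomorphisms, positive rank on
nonzero subsheaves by torsion-freeness), `q`-stability gives for every proper
nonzero subsheaf `N` of `E₂` (applied to `ker f` and `im f`) the inequality
`P(N)/rk(N) + q/rk(N) < P(E₂)/r₂ + q/r₂`, and `φ` is nonzero. -/
theorem stmt9 {R F : Type*} [CommRing R] [Field F] [LinearOrder F] [IsStrictOrderedRing F]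
    {E₁ E₂ : Type*} [AddCommGroup E₁] [Module R E₁] [AddCommGroup E₂] [Module R E₂]
    (φ : E₁ →ₗ[R] E₂)
    (r₂ q : F) (hq : 0 < q) (hr₂ : 0 < r₂)
    (rk P : Submodule R E₂ → F)
    (hrk_top : rk ⊤ = r₂)
    (hrk0 : ∀ N : Submodule R E₂, rk N = 0 → N = ⊥)
    (hrkpos : ∀ N : Submodule R E₂, N ≠ ⊥ → 0 < rk N)
    (hadd : ∀ f : E₂ →ₗ[R] E₂,
      rk (LinearMap.ker f) + rk (LinearMap.range f) = r₂ ∧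
      P (LinearMap.ker f) + P (LinearMap.range f) = P ⊤)
    (hstab : ∀ N : Submodule R E₂, N ≠ ⊥ → N ≠ ⊤ →
      P N / rk N + q / rk N < P ⊤ / r₂ + q / r₂)
    (hφ : LinearMap.range φ ≠ ⊥) :
    Function.Injective (fun f : E₂ →ₗ[R] E₂ => f ∘ₗ φ) :=
  stmt9_general φ r₂ q hq hr₂ rk P hrk_top hrkpos hadd hstab hφ
end

section
/- (Relative-to-absolute obstruction theory by cone construction.) Let f₂ : M → N and f₁ : N → B be morphisms with f = f₁∘f₂, and suppose α₁ : F₁• → L•_{f₁} and α₂ : F₂• → L•_{f₂} are perfect relative obstruction theories (each h⁰ an isomorphism and h^{−1} an epimorphism, amplitude [−1,0]), fitting in a commutative square F₂•[−1] → Lf₂*F₁• over L•_{f₂}[−1] → Lf₂*L•_{f₁}. Then the induced map on cones α₃ : F• := Cone(F₂•[−1] → Lf₂*F₁•) → L•_f satisfies: h⁰(α₃) is an isomorphism and h^{−1}(α₃) is an epimorphism, and F• is perfect of amplitude [−1,0]; hence α₃ is a perfect relative obstruction theory for f. -/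
/-!
Applying `H` to the morphism of distinguished triangles `(α₂⟦-1⟧, α₁, α₃)` gives a map between
two long exact sequences. The four lemma on the segments around `H(α₃)` and `H(α₃⟦-1⟧)` gives
the isomorphism and the epimorphism; the vanishing of `H¹(F₁)` supplies the monomorphism that
the epi half of the four lemma needs. The amplitude of the cone is read off the long exact
sequence of the first triangle.
-/

open CategoryTheory CategoryTheory.Limits CategoryTheory.Pretriangulated

namespace CategoryTheory.Functor

section Shift

variable {C D : Type*} [Category C] [Category D] [HasShift C ℤ] (H : C ⥤ D)
  {X Y : C} (u : X ⟶ Y) {m n : ℤ}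

lemma map_shift_shift_eq (h : m + n = 0) :
    H.map (u⟦m⟧'⟦n⟧') = H.map ((shiftFunctorCompIsoId C m n h).hom.app X) ≫ H.map u ≫
      H.map ((shiftFunctorCompIsoId C m n h).inv.app Y) :=
  (NatIso.naturality_2 (isoWhiskerRight (shiftFunctorCompIsoId C m n h) H) u).symm

lemma isIso_map_shift_shift (h : m + n = 0) [IsIso (H.map u)] : IsIso (H.map (u⟦m⟧'⟦n⟧')) := by
  rw [H.map_shift_shift_eq u h]
  infer_instance

lemma epi_map_shift_shift (h : m + n = 0) [Epi (H.map u)] : Epi (H.map (u⟦m⟧'⟦n⟧')) := by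
  rw [H.map_shift_shift_eq u h]
  infer_instance

end Shift

variable {C D : Type*} [Category C] [Category D] [Preadditive C]
    [HasZeroObject C] [HasShift C ℤ] [∀ n : ℤ, (shiftFunctor C n).Additive]
    [Pretriangulated C] [Abelian D] (H : C ⥤ D)

noncomputable def triangleRow (T : Triangle C) : ComposableArrows D 3 :=
  ComposableArrows.mk₃ (H.map T.mor₁) (H.map T.mor₂) (H.map T.mor₃)

noncomputable def triangleRowMap {T T' : Triangle C} (φ : T ⟶ T') :
    H.triangleRow T ⟶ H.triangleRow T' :=
  ComposableArrows.homMk₃ (H.map φ.hom₁) (H.map φ.hom₂) (H.map φ.hom₃) (H.map (φ.hom₁⟦(1 : ℤ)⟧'))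
    ((H.map_comp _ _).symm.trans ((congrArg H.map φ.comm₁).trans (H.map_comp _ _)))
    ((H.map_comp _ _).symm.trans ((congrArg H.map φ.comm₂).trans (H.map_comp _ _)))
    ((H.map_comp _ _).symm.trans ((congrArg H.map φ.comm₃).trans (H.map_comp _ _)))

variable [H.IsHomological]

lemma triangleRow_exact {T : Triangle C} (hT : T ∈ distTriang C) : (H.triangleRow T).Exact :=
  ComposableArrows.exact_of_δ₀ (H.map_distinguished_exact T hT).exact_toComposableArrows
    (H.map_distinguished_exact _ (rot_of_distTriang T hT)).exact_toComposableArrows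

lemma isZero_map_obj₃_of_distTriang {T : Triangle C} (hT : T ∈ distTriang C)
    (h₂ : IsZero (H.obj T.obj₂)) (h₄ : IsZero (H.obj (T.obj₁⟦(1 : ℤ)⟧))) :
    IsZero (H.obj T.obj₃) :=
  (H.map_distinguished_exact _ (rot_of_distTriang T hT)).isZero_of_both_zeros
    (h₂.eq_of_src _ _) (h₄.eq_of_tgt _ _)

variable {T T' : Triangle C} (hT : T ∈ distTriang C) (hT' : T' ∈ distTriang C) (φ : T ⟶ T')
include hT hT'

lemma mono_map_hom₃_of_distTriang (h₁ : Epi (H.map φ.hom₁)) (h₂ : Mono (H.map φ.hom₂))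
    (h₄ : Mono (H.map (φ.hom₁⟦(1 : ℤ)⟧'))) : Mono (H.map φ.hom₃) :=
  Abelian.mono_of_epi_of_mono_of_mono (H.triangleRowMap φ)
    (H.triangleRow_exact hT) (H.triangleRow_exact hT') h₁ h₂ h₄

lemma epi_map_hom₃_of_distTriang (h₂ : Epi (H.map φ.hom₂))
    (h₄ : Epi (H.map (φ.hom₁⟦(1 : ℤ)⟧'))) (h₅ : Mono (H.map (φ.hom₂⟦(1 : ℤ)⟧'))) :
    Epi (H.map φ.hom₃) :=
  Abelian.epi_of_epi_of_epi_of_mono (H.triangleRowMap ((rotate C).map φ))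
    (H.triangleRow_exact (rot_of_distTriang T hT))
    (H.triangleRow_exact (rot_of_distTriang T' hT')) h₂ h₄ h₅

end CategoryTheory.Functor

/-- Relative-to-absolute obstruction theory by the cone construction,
stated in a triangulated category with a homological functor `H` (with the
convention `H^n(X) := H(X⟦n⟧)`, so an object/morphism "in amplitude `[−1,0]`" has
`H^n = 0` for `n ∉ {−1,0}`, and an obstruction theory `α : F• → L•` satisfies:
`H⁰(α)` is an isomorphism and `H⁻¹(α)` an epimorphism). Given perfect relative
obstruction theories `α₁ : F₁• → L•_{f₁}`, `α₂ : F₂• → L•_{f₂}` fitting in a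
commutative square `F₂•[−1] → Lf₂*F₁•` over `L•_{f₂}[−1] → Lf₂*L•_{f₁}` and
completed to a morphism of distinguished triangles with cone map
`α₃ : F• := Cone(F₂•[−1] → Lf₂*F₁•) → L•_f`, the map `α₃` satisfies:
`H⁰(α₃)` is an isomorphism, `H⁻¹(α₃)` is an epimorphism, and `F•` is perfect of
amplitude `[−1,0]`; hence `α₃` is a perfect relative obstruction theory for `f`. -/
theorem stmt16 {C D : Type*} [Category C] [Category D] [Preadditive C]
    [HasZeroObject C] [HasShift C ℤ] [∀ n : ℤ, (shiftFunctor C n).Additive]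
    [Pretriangulated C] [Abelian D]
    (H : C ⥤ D) [H.IsHomological]
    (F₂ F₁ Fc L₂ L₁ Lf : C)
    (rmap : F₂⟦(-1 : ℤ)⟧ ⟶ F₁) (a : F₁ ⟶ Fc) (b : Fc ⟶ (F₂⟦(-1 : ℤ)⟧)⟦(1 : ℤ)⟧)
    (j₂ : L₂⟦(-1 : ℤ)⟧ ⟶ L₁) (j₁ : L₁ ⟶ Lf) (j₃ : Lf ⟶ (L₂⟦(-1 : ℤ)⟧)⟦(1 : ℤ)⟧)
    (hT₁ : Triangle.mk rmap a b ∈ distTriang C)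
    (hT₂ : Triangle.mk j₂ j₁ j₃ ∈ distTriang C)
    (α₁ : F₁ ⟶ L₁) (α₂ : F₂ ⟶ L₂) (α₃ : Fc ⟶ Lf)
    (hc₁ : rmap ≫ α₁ = (shiftFunctor C (-1 : ℤ)).map α₂ ≫ j₂)
    (hc₂ : a ≫ α₃ = α₁ ≫ j₁)
    (hc₃ : α₃ ≫ j₃ = b ≫ ((shiftFunctor C (-1 : ℤ)).map α₂)⟦(1 : ℤ)⟧')
    (h0iso₁ : IsIso (H.map α₁)) (h0iso₂ : IsIso (H.map α₂))
    (hm1epi₁ : Epi (H.map ((shiftFunctor C (-1 : ℤ)).map α₁)))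
    (hm1epi₂ : Epi (H.map ((shiftFunctor C (-1 : ℤ)).map α₂)))
    (hamp₁ : ∀ n : ℤ, n ≠ 0 → n ≠ -1 → IsZero (H.obj (F₁⟦n⟧)))
    (hamp₂ : ∀ n : ℤ, n ≠ 0 → n ≠ -1 → IsZero (H.obj (F₂⟦n⟧))) :
    IsIso (H.map α₃) ∧ Epi (H.map ((shiftFunctor C (-1 : ℤ)).map α₃)) ∧
    (∀ n : ℤ, n ≠ 0 → n ≠ -1 → IsZero (H.obj (Fc⟦n⟧))) := by
  let φ : Triangle.mk rmap a b ⟶ Triangle.mk j₂ j₁ j₃ :=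
    { hom₁ := α₂⟦(-1 : ℤ)⟧', hom₂ := α₁, hom₃ := α₃
      comm₁ := hc₁, comm₂ := hc₂, comm₃ := hc₃.symm }
  have hα₁ : IsIso (H.map (α₁⟦(-1 : ℤ)⟧'⟦(1 : ℤ)⟧')) :=
    H.isIso_map_shift_shift α₁ (by norm_num)
  have hα₂ : IsIso (H.map (α₂⟦(-1 : ℤ)⟧'⟦(1 : ℤ)⟧')) :=
    H.isIso_map_shift_shift α₂ (by norm_num)
  refine ⟨?_, ?_, fun n hn₀ hn₁ => ?_⟩
  · have : Mono (H.map α₃) := H.mono_map_hom₃_of_distTriang hT₁ hT₂ φ hm1epi₂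
      (inferInstance : Mono (H.map α₁)) (inferInstance : Mono (H.map (α₂⟦(-1 : ℤ)⟧'⟦(1 : ℤ)⟧')))
    have : Epi (H.map α₃) := H.epi_map_hom₃_of_distTriang hT₁ hT₂ φ
      (inferInstance : Epi (H.map α₁)) (inferInstance : Epi (H.map (α₂⟦(-1 : ℤ)⟧'⟦(1 : ℤ)⟧')))
      ((hamp₁ 1 (by norm_num) (by norm_num)).mono _)
    exact isIso_of_mono_of_epi _
  · exact H.epi_map_hom₃_of_distTriang (Triangle.shift_distinguished _ hT₁ (-1))
      (Triangle.shift_distinguished _ hT₂ (-1)) ((Triangle.shiftFunctor C (-1)).map φ) hm1epi₁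
      (H.epi_map_shift_shift (α₂⟦(-1 : ℤ)⟧') (by norm_num))
      (inferInstance : Mono (H.map (α₁⟦(-1 : ℤ)⟧'⟦(1 : ℤ)⟧')))
  · have e : F₂⟦n⟧ ≅ (F₂⟦(-1 : ℤ)⟧⟦n⟧)⟦(1 : ℤ)⟧ :=
      (shiftFunctorAdd' C (n - 1) 1 n (by omega)).app F₂ ≪≫
        (shiftFunctor C (1 : ℤ)).mapIso ((shiftFunctorAdd' C (-1) n (n - 1) (by omega)).app F₂)
    exact H.isZero_map_obj₃_of_distTriang (Triangle.shift_distinguished _ hT₁ n)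
      (hamp₁ n hn₀ hn₁) ((hamp₂ n hn₀ hn₁).of_iso (H.mapIso e.symm))
end
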